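/- arXiv:0904.2753 — 2 statements merged into one kernel-verified Lean document; each statement's English description precedes it below -/
import Mathlib

section
/- Let (≤₁, τ : S → Fin n) and (≤₂, τ̃ : S → Fin n′) be pruned 2-trees on a finite set S, and suppose there is a morphism from (≤₁, τ) to (≤₂, τ̃) inducing the identity on S. Then FN_{(≤₂,τ̃)} is contained in the closure of FN_{(≤₁,τ)} in Conf(S). If moreover (≤₂, τ̃) ≠ (≤₁, τ), then FN_{(≤₂,τ̃)} is disjoint from FN_{(≤₁,τ)}, and hence FN_{(≤₂,τ̃)} is contained in the frontier (topological boundary) of FN_{(≤₁,τ)}. -/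
/-- The configuration space `Conf S`: the set of injective maps (configurations)
`p : S → ℝ × ℝ`, as a subset of the product space `S → ℝ × ℝ`. -/
def Conf (S : Type*) : Set (S → ℝ × ℝ) := {p | Function.Injective p}

/-- Condition (I) on a surjection `σ`: consecutive values are distinct. -/
def CondI {S : Type*} {k : ℕ} (σ : Fin k → S) : Prop :=
  ∀ i j : Fin k, (j : ℕ) = (i : ℕ) + 1 → σ i ≠ σ j

/-- Condition (II): no interleaving pattern `i₁ < j₁ < i₂ < j₂` with
`i₁, i₂ ∈ σ⁻¹(s)` and `j₁, j₂ ∈ σ⁻¹(s')` for `s ≠ s'`. -/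
def CondII {S : Type*} {k : ℕ} (σ : Fin k → S) : Prop :=
  ¬ ∃ (s s' : S) (i₁ j₁ i₂ j₂ : Fin k),
      s ≠ s' ∧ i₁ < j₁ ∧ j₁ < i₂ ∧ i₂ < j₂ ∧
      σ i₁ = s ∧ σ i₂ = s ∧ σ j₁ = s' ∧ σ j₂ = s'

/-- `σ ∈ D(S, N)`: a surjection `σ : {1, …, N + |S|} → S` satisfying (I) and (II).
(The condition `k = N + |S|` is imposed as a separate hypothesis in the theorems.) -/
def MemD {S : Type*} {k : ℕ} (σ : Fin k → S) : Prop :=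
  Function.Surjective σ ∧ CondI σ ∧ CondII σ

/-- Condition (C1) on a configuration `p`: if some element of `σ⁻¹(s)` lies strictly
between two elements of `σ⁻¹(s')` (for `s ≠ s'`) then `x_s < x_{s'}`. -/
def CondC1 {S : Type*} {k : ℕ} (σ : Fin k → S) (p : S → ℝ × ℝ) : Prop :=
  ∀ s s' : S, s ≠ s' →
    (∃ i j₁ j₂ : Fin k, σ i = s ∧ σ j₁ = s' ∧ σ j₂ = s' ∧ j₁ < i ∧ i < j₂) →
    (p s).1 < (p s').1

/-- Condition (C2) on a configuration `p`: if `x_s = x_{s'}` (for `s ≠ s'`) and every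
element of `σ⁻¹(s)` is smaller than every element of `σ⁻¹(s')` then `y_s < y_{s'}`. -/
def CondC2 {S : Type*} {k : ℕ} (σ : Fin k → S) (p : S → ℝ × ℝ) : Prop :=
  ∀ s s' : S, s ≠ s' → (p s).1 = (p s').1 →
    (∀ i j : Fin k, σ i = s → σ j = s' → i < j) →
    (p s).2 < (p s').2

/-- A pruned 2-tree on `S`: a linear order `r` (as a `≤`-relation) together with a
surjection `τ : S → Fin n` which is monotone with respect to `r`. -/
def IsPruned2Tree {S : Type*} {n : ℕ} (r : S → S → Prop) (τ : S → Fin n) : Prop :=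
  IsLinearOrder S r ∧ Function.Surjective τ ∧ ∀ s s', r s s' → τ s ≤ τ s'

/-- The Fox–Neuwirth cell of a 2-tree `(r, τ)`: configurations `p` such that
(i) `τ s < τ s'` implies `x_s < x_{s'}`, and (ii) `τ s = τ s'` and `s <₁ s'`
imply `x_s = x_{s'}` and `y_s < y_{s'}`. -/
def FNcell {S : Type*} {n : ℕ} (r : S → S → Prop) (τ : S → Fin n) :
    Set (S → ℝ × ℝ) :=
  {p | Function.Injective p ∧
    (∀ s s', τ s < τ s' → (p s).1 < (p s').1) ∧
    (∀ s s', τ s = τ s' → r s s' → s ≠ s' →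
      (p s).1 = (p s').1 ∧ (p s).2 < (p s').2)}

/-- `σ ∈ D(τ, N)`: the additional conditions (B) and (C) relative to the 2-tree
`(r, τ)` (conditions (I), (II) and surjectivity, i.e. `σ ∈ D(S, N)`, are imposed
separately). -/
def MemDtree {S : Type*} {n k : ℕ} (r : S → S → Prop) (τ : S → Fin n)
    (σ : Fin k → S) : Prop :=
  (∀ s s' : S, s ≠ s' →
      (∃ i j₁ j₂ : Fin k, σ i = s ∧ σ j₁ = s' ∧ σ j₂ = s' ∧ j₁ < i ∧ i < j₂) →
      τ s < τ s') ∧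
  (∀ s s' : S, τ s = τ s' → r s s' → s ≠ s' →
      ∀ i j : Fin k, σ i = s → σ j = s' → i < j)

/-- A morphism of pruned 2-trees on `S` from `(r, τ)` to `(r', τ')` inducing the
identity on `S`: a monotone map `P : Fin n → Fin n'` with `τ' = P ∘ τ` such that
`τ s = τ s'` and `s <₁ s'` imply `s <₂ s'`. -/
def TreeMorphism {S : Type*} {n n' : ℕ} (r : S → S → Prop) (τ : S → Fin n)
    (r' : S → S → Prop) (τ' : S → Fin n') : Prop :=
  ∃ P : Fin n → Fin n', Monotone P ∧ (∀ s, τ' s = P (τ s)) ∧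
    ∀ s s' : S, τ s = τ s' → r s s' → s ≠ s' → r' s s'


/-!
Pulling the columns of `(r, τ)` apart, i.e. replacing `x_s` by `x_s + ε τ(s)`, turns a
configuration of `FN_{(r', τ')}` into one of `FN_{(r, τ)}`: columns that `P` merges are separated,
columns that are already separated stay so, since `P` is monotone. Letting `ε → 0` gives the closure
statement. A configuration in both cells determines the order of the columns through its
`x`-coordinates, so `τ` and `τ'` are surjections onto initial segments inducing the same preorder,
hence equal; and a linear order contained in another one equals it, which gives `r = r'`.
-/

open Topology

theorem Fin.val_eq_val_of_surjective_of_le_iff {S : Type*} {n n' : ℕ} {τ : S → Fin n}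
    {τ' : S → Fin n'} (hτ : Function.Surjective τ) (hτ' : Function.Surjective τ')
    (hle : ∀ a b, τ a ≤ τ b ↔ τ' a ≤ τ' b) (s : S) : (τ s : ℕ) = τ' s := by
  let g := Function.surjInv hτ
  have hg : ∀ i, τ (g i) = i := Function.surjInv_eq hτ
  let F : Fin n → Fin n' := fun i => τ' (g i)
  have hFτ : ∀ s, F (τ s) = τ' s := fun s =>
    le_antisymm ((hle _ _).1 (hg _).le) ((hle _ _).1 (hg _).ge)
  have hF : StrictMono F := fun i j hij => by
    simpa only [F, hg, not_le] using (hle (g j) (g i)).not.1 (by simpa only [hg, not_le])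
  have hFsurj : Function.Surjective F := fun j => by
    obtain ⟨s, rfl⟩ := hτ' j
    exact ⟨τ s, hFτ s⟩
  rw [← hFτ, ← Fin.coe_orderIso_apply (StrictMono.orderIsoOfSurjective F hF hFsurj)]
  rfl

theorem rel_eq_of_imp {S : Type*} {r r' : S → S → Prop} [Std.Total r] [Std.Antisymm r']
    (h : ∀ a b, r a b → r' a b) : r = r' := by
  funext a b
  refine propext ⟨h a b, fun hab' => (total_of r a b).elim id fun hba => ?_⟩
  obtain rfl := antisymm hab' (h b a hba)
  exact hba

section FNcell

variable {S : Type*} {n n' : ℕ} {r : S → S → Prop} {τ : S → Fin n} {p : S → ℝ × ℝ}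

theorem FNcell_subset_Conf : FNcell r τ ⊆ Conf S := fun _ hp => hp.1

theorem mem_FNcell_of_forall [Std.Total r]
    (hx : ∀ s s', τ s < τ s' → (p s).1 < (p s').1)
    (hy : ∀ s s', τ s = τ s' → r s s' → s ≠ s' → (p s).1 = (p s').1 ∧ (p s).2 < (p s').2) :
    p ∈ FNcell r τ := by
  refine ⟨fun s s' hss' => ?_, hx, hy⟩
  by_contra hne
  rcases lt_trichotomy (τ s) (τ s') with hlt | heq | hgt
  · exact (hx s s' hlt).ne congr(($hss').1)
  · rcases total_of r s s' with hr | hr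
    · exact (hy s s' heq hr hne).2.ne congr(($hss').2)
    · exact (hy s' s heq.symm hr (Ne.symm hne)).2.ne congr(($hss').2).symm
  · exact (hx s' s hgt).ne congr(($hss').1).symm

theorem fst_eq_of_mem_FNcell [Std.Total r] (hp : p ∈ FNcell r τ) {a b : S} (h : τ a = τ b) :
    (p a).1 = (p b).1 := by
  rcases eq_or_ne a b with rfl | hne
  · rfl
  rcases total_of r a b with hr | hr
  · exact (hp.2.2 a b h hr hne).1
  · exact (hp.2.2 b a h.symm hr hne.symm).1.symm

theorem fst_le_fst_iff_of_mem_FNcell [Std.Total r] (hp : p ∈ FNcell r τ) (a b : S) :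
    (p a).1 ≤ (p b).1 ↔ τ a ≤ τ b := by
  refine ⟨fun hx => not_lt.1 fun hlt => (hp.2.1 b a hlt).not_ge hx, fun hτ => ?_⟩
  rcases hτ.lt_or_eq with hlt | heq
  · exact (hp.2.1 a b hlt).le
  · exact (fst_eq_of_mem_FNcell hp heq).le

def shiftColumns (p : S → ℝ × ℝ) (τ : S → Fin n) (ε : ℝ) : S → ℝ × ℝ :=
  fun s => ((p s).1 + ε * (τ s : ℕ), (p s).2)

theorem continuous_shiftColumns (p : S → ℝ × ℝ) (τ : S → Fin n) :
    Continuous (shiftColumns p τ) := by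
  unfold shiftColumns
  fun_prop

theorem shiftColumns_mem_FNcell {r' : S → S → Prop} {τ' : S → Fin n'} [Std.Total r]
    [Std.Total r'] (hom : TreeMorphism r τ r' τ') (hp : p ∈ FNcell r' τ') {ε : ℝ} (hε : 0 < ε) :
    shiftColumns p τ ε ∈ FNcell r τ := by
  obtain ⟨P, hP, hPτ, hrr'⟩ := hom
  refine mem_FNcell_of_forall (fun s s' hlt => ?_) (fun s s' heq hr hne => ?_)
  · have hx : (p s).1 ≤ (p s').1 :=
      (fst_le_fst_iff_of_mem_FNcell hp s s').2 (by simpa only [hPτ] using hP hlt.le)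
    have hτ : ((τ s : ℕ) : ℝ) < (τ s' : ℕ) := by exact_mod_cast hlt
    exact add_lt_add_of_le_of_lt hx (mul_lt_mul_of_pos_left hτ hε)
  · have hτ' : τ' s = τ' s' := by rw [hPτ, hPτ, heq]
    obtain ⟨hx, hy⟩ := hp.2.2 s s' hτ' (hrr' s s' heq hr hne) hne
    exact ⟨by simp only [shiftColumns, hx, heq], hy⟩

theorem FNcell_subset_closure {r' : S → S → Prop} {τ' : S → Fin n'} [Std.Total r]
    [Std.Total r'] (hom : TreeMorphism r τ r' τ') :
    FNcell r' τ' ⊆ closure (FNcell r τ) := fun p hp => by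
  have hlim : Filter.Tendsto (shiftColumns p τ) (𝓝[>] 0) (𝓝 p) := by
    have h0 : shiftColumns p τ 0 = p := funext fun s => by simp [shiftColumns]
    exact ((continuous_shiftColumns p τ).tendsto' 0 p h0).mono_left nhdsWithin_le_nhds
  exact mem_closure_of_tendsto hlim
    (eventually_nhdsWithin_of_forall fun ε hε => shiftColumns_mem_FNcell hom hp hε)

theorem eq_of_mem_FNcell_of_mem_FNcell {r' : S → S → Prop} {τ' : S → Fin n'}
    (h : IsPruned2Tree r τ) (h' : IsPruned2Tree r' τ') (hom : TreeMorphism r τ r' τ')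
    (hp : p ∈ FNcell r τ) (hp' : p ∈ FNcell r' τ') :
    r = r' ∧ ∀ s, (τ s : ℕ) = τ' s := by
  obtain ⟨hlin, hτ, hmono⟩ := h
  obtain ⟨hlin', hτ', hmono'⟩ := h'
  obtain ⟨-, -, -, hrr'⟩ := hom
  have hle : ∀ a b, τ a ≤ τ b ↔ τ' a ≤ τ' b := fun a b => by
    rw [← fst_le_fst_iff_of_mem_FNcell hp, fst_le_fst_iff_of_mem_FNcell hp']
  refine ⟨rel_eq_of_imp fun a b hab => ?_, Fin.val_eq_val_of_surjective_of_le_iff hτ hτ' hle⟩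
  rcases eq_or_ne a b with rfl | hne
  · exact refl_of r' a
  rcases (hmono a b hab).lt_or_eq with hlt | heq
  · have hlt' : τ' a < τ' b := by simpa only [not_le] using (hle b a).not.1 hlt.not_ge
    exact (total_of r' a b).resolve_right fun hba => (hmono' b a hba).not_gt hlt'
  · exact hrr' a b heq hab hne

end FNcell

theorem statement6_general {S : Type*} {n n' : ℕ}
    (r : S → S → Prop) (τ : S → Fin n) (r' : S → S → Prop) (τ' : S → Fin n')
    (h : IsPruned2Tree r τ) (h' : IsPruned2Tree r' τ')
    (hom : TreeMorphism r τ r' τ') :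
    ({q : ↥(Conf S) | (q : S → ℝ × ℝ) ∈ FNcell r' τ'} ⊆
        closure {q : ↥(Conf S) | (q : S → ℝ × ℝ) ∈ FNcell r τ}) ∧
    (¬ (r = r' ∧ ∀ s, (τ s : ℕ) = (τ' s : ℕ)) →
        Disjoint (FNcell r' τ') (FNcell r τ) ∧
        {q : ↥(Conf S) | (q : S → ℝ × ℝ) ∈ FNcell r' τ'} ⊆
          frontier {q : ↥(Conf S) | (q : S → ℝ × ℝ) ∈ FNcell r τ}) := by
  have := h.1
  have := h'.1
  have hclos : {q : ↥(Conf S) | (q : S → ℝ × ℝ) ∈ FNcell r' τ'} ⊆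
      closure {q : ↥(Conf S) | (q : S → ℝ × ℝ) ∈ FNcell r τ} := fun q hq => by
    rw [closure_subtype]
    change _ ∈ closure (Subtype.val '' (Subtype.val ⁻¹' FNcell r τ))
    rw [Subtype.image_preimage_coe, Set.inter_eq_right.2 FNcell_subset_Conf]
    exact FNcell_subset_closure hom hq
  refine ⟨hclos, fun hne => ?_⟩
  have hdisj : Disjoint (FNcell r' τ') (FNcell r τ) := Set.disjoint_left.2 fun p hp' hp =>
    hne (eq_of_mem_FNcell_of_mem_FNcell h h' hom hp hp')
  refine ⟨hdisj, fun q hq => ⟨hclos hq, fun hint => ?_⟩⟩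
  have hq_mem : q ∈ {q : ↥(Conf S) | (q : S → ℝ × ℝ) ∈ FNcell r τ} := interior_subset hint
  exact Set.disjoint_left.1 hdisj hq hq_mem

/-- If there is a morphism of pruned 2-trees `(r, τ) → (r', τ')`
inducing the identity on `S`, then `FN_{(r',τ')}` is contained in the closure of
`FN_{(r,τ)}` in `Conf(S)`; if moreover the two trees are distinct, then the two cells
are disjoint and `FN_{(r',τ')}` lies in the frontier of `FN_{(r,τ)}` in `Conf(S)`. -/
theorem statement6 {S : Type*} [Fintype S] {n n' : ℕ}
    (r : S → S → Prop) (τ : S → Fin n) (r' : S → S → Prop) (τ' : S → Fin n')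
    (h : IsPruned2Tree r τ) (h' : IsPruned2Tree r' τ')
    (hom : TreeMorphism r τ r' τ') :
    ({q : ↥(Conf S) | (q : S → ℝ × ℝ) ∈ FNcell r' τ'} ⊆
        closure {q : ↥(Conf S) | (q : S → ℝ × ℝ) ∈ FNcell r τ}) ∧
    (¬ (r = r' ∧ ∀ s, (τ s : ℕ) = (τ' s : ℕ)) →
        Disjoint (FNcell r' τ') (FNcell r τ) ∧
        {q : ↥(Conf S) | (q : S → ℝ × ℝ) ∈ FNcell r' τ'} ⊆
          frontier {q : ↥(Conf S) | (q : S → ℝ × ℝ) ∈ FNcell r τ}) :=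
  statement6_general r τ r' τ' h h' hom
end

section
/- Let S be a finite set with m = |S|, N ≥ 0, and let (≤₁, τ) be a pruned 2-tree on S with σ ∈ D(τ, N). Define Φ_σ(τ) ⊆ Conf(S) as the union of the Fox–Neuwirth cells FN_{(≤₂,τ̃)} over all pruned 2-trees (≤₂, τ̃) on S with σ ∈ D(τ̃, N) that admit a morphism from (≤₁, τ) inducing the identity on S. Then Φ_σ(τ) is contractible. -/
/-- The space `Φ_σ(τ)`: the union of the Fox–Neuwirth cells `FN_{(r', τ')}` over all
pruned 2-trees `(r', τ')` on `S` with `σ ∈ D(τ', N)` admitting a morphism from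
`(r, τ)` inducing the identity on `S`. -/
def Phi {S : Type*} {n k : ℕ} (r : S → S → Prop) (τ : S → Fin n)
    (σ : Fin k → S) : Set (S → ℝ × ℝ) :=
  {p | ∃ (n' : ℕ) (r' : S → S → Prop) (τ' : S → Fin n'),
      IsPruned2Tree r' τ' ∧ MemDtree r' τ' σ ∧ TreeMorphism r τ r' τ' ∧
      p ∈ FNcell r' τ'}

section Order

theorem exists_surjective_fin_le_iff {ι α : Type*} [Fintype ι] [LinearOrder α] (f : ι → α) :
    ∃ (m : ℕ) (g : ι → Fin m), Function.Surjective g ∧ ∀ i j, g i ≤ g j ↔ f i ≤ f j := by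
  classical
  let e := (Finset.univ.image f).orderIsoOfFin rfl
  refine ⟨_, fun i => e.symm ⟨f i, Finset.mem_image_of_mem f (Finset.mem_univ i)⟩,
    fun c => ?_, fun i j => e.symm.le_iff_le⟩
  obtain ⟨i, -, hi⟩ := Finset.mem_image.1 (e c).2
  exact ⟨i, e.symm_apply_eq.2 (Subtype.ext hi)⟩

theorem isLinearOrder_comap {ι α : Type*} [LinearOrder α] {f : ι → α}
    (hf : Function.Injective f) : IsLinearOrder ι (fun i j => f i ≤ f j) where
  refl _ := le_rfl
  trans _ _ _ := le_trans
  antisymm _ _ h h' := hf (le_antisymm h h')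
  total _ _ := le_total _ _

theorem eq_and_eq_of_mul_add_mul_eq {R : Type*} [Semiring R] [LinearOrder R]
    [IsStrictOrderedRing R] {a b u v u' v' : R} (ha : 0 < a) (hb : 0 < b) (hu : u ≤ v)
    (hu' : u' ≤ v') (h : a * u + b * u' = a * v + b * v') : u = v ∧ u' = v' := by
  obtain ⟨h, h'⟩ := (add_eq_add_iff_eq_and_eq (mul_le_mul_of_nonneg_left hu ha.le)
    (mul_le_mul_of_nonneg_left hu' hb.le)).1 h
  exact ⟨hu.antisymm (le_of_mul_le_mul_left h.ge ha), hu'.antisymm (le_of_mul_le_mul_left h'.ge hb)⟩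

end Order

section Patterns

variable {S : Type*} {k : ℕ}

def AllBefore (σ : Fin k → S) (s s' : S) : Prop :=
  ∀ i j : Fin k, σ i = s → σ j = s' → i < j

def Nested (σ : Fin k → S) (s s' : S) : Prop :=
  ∃ i j₁ j₂ : Fin k, σ i = s ∧ σ j₁ = s' ∧ σ j₂ = s' ∧ j₁ < i ∧ i < j₂

variable {σ : Fin k → S} {s s' : S}

theorem allBefore_or_nested (hne : s ≠ s') :
    AllBefore σ s s' ∨ AllBefore σ s' s ∨ Nested σ s s' ∨ Nested σ s' s := by
  rw [or_iff_not_imp_left, or_iff_not_imp_left]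
  simp only [AllBefore, not_forall, not_lt]
  rintro ⟨i, j, hi, hj, hji⟩ ⟨j', i', hj', hi', hij'⟩
  have hji : j < i := hji.lt_of_ne (by rintro rfl; exact hne (hi.symm.trans hj))
  have hij' : i' < j' := hij'.lt_of_ne (by rintro rfl; exact hne (hi'.symm.trans hj'))
  rcases lt_or_gt_of_ne (show i' ≠ j by rintro rfl; exact hne (hi'.symm.trans hj)) with h | h
  · exact Or.inr ⟨j, i', i, hj, hi', hi, h, hji⟩
  · exact Or.inl ⟨i', j, j', hi', hj, hj', h, hij'⟩

theorem AllBefore.not_allBefore (hσ : Function.Surjective σ) (h : AllBefore σ s s') :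
    ¬AllBefore σ s' s := by
  obtain ⟨i, rfl⟩ := hσ s
  obtain ⟨j, rfl⟩ := hσ s'
  exact fun h' => (h i j rfl rfl).asymm (h' j i rfl rfl)

theorem injective_of_condC1_of_condC2 {p : S → ℝ × ℝ} (h₁ : CondC1 σ p) (h₂ : CondC2 σ p) :
    Function.Injective p := by
  intro s s' hp
  by_contra hne
  have hx : (p s).1 = (p s').1 := congrArg Prod.fst hp
  rcases allBefore_or_nested hne with h | h | h | h
  · exact (h₂ s s' hne hx h).ne (congrArg Prod.snd hp)
  · exact (h₂ s' s (Ne.symm hne) hx.symm h).ne (congrArg Prod.snd hp.symm)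
  · exact (h₁ s s' hne h).ne hx
  · exact (h₁ s' s (Ne.symm hne) h).ne hx.symm

end Patterns

section Phi

variable {S : Type*} {n n' k : ℕ} {r r' : S → S → Prop} {τ : S → Fin n} {τ' : S → Fin n'}
  {σ : Fin k → S} {p : S → ℝ × ℝ} {s s' : S}

theorem fst_lt_of_mem_FNcell (hp : p ∈ FNcell r' τ') (h : τ' s < τ' s') : (p s).1 < (p s').1 :=
  hp.2.1 s s' h

theorem fst_eq_of_mem_FNcell_s7 (hr' : IsLinearOrder S r') (hp : p ∈ FNcell r' τ')
    (h : τ' s = τ' s') : (p s).1 = (p s').1 := by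
  rcases eq_or_ne s s' with rfl | hne
  · rfl
  rcases hr'.total s s' with hss' | hs's
  · exact (hp.2.2 s s' h hss' hne).1
  · exact (hp.2.2 s' s h.symm hs's hne.symm).1.symm

theorem fst_le_of_mem_FNcell (hr' : IsLinearOrder S r') (hp : p ∈ FNcell r' τ')
    (h : τ' s ≤ τ' s') : (p s).1 ≤ (p s').1 :=
  h.lt_or_eq.elim (fun h => (fst_lt_of_mem_FNcell hp h).le)
    fun h => (fst_eq_of_mem_FNcell_s7 hr' hp h).le

theorem eq_of_fst_eq_of_mem_FNcell (hp : p ∈ FNcell r' τ') (h : (p s).1 = (p s').1) :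
    τ' s = τ' s' := by
  rcases lt_trichotomy (τ' s) (τ' s') with hlt | heq | hgt
  · exact absurd h (fst_lt_of_mem_FNcell hp hlt).ne
  · exact heq
  · exact absurd h (fst_lt_of_mem_FNcell hp hgt).ne'

variable (τ σ) in
def PhiCond : Set (S → ℝ × ℝ) :=
  {p | (∀ s s', τ s ≤ τ s' → (p s).1 ≤ (p s').1) ∧ CondC1 σ p ∧ CondC2 σ p}

theorem phi_subset_phiCond (hσ : Function.Surjective σ) : Phi r τ σ ⊆ PhiCond τ σ := by
  rintro p ⟨n', r', τ', ⟨hr', -, -⟩, ⟨hB, hC⟩, ⟨P, hP, hPτ, -⟩, hp⟩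
  refine ⟨fun s s' h => fst_le_of_mem_FNcell hr' hp ?_, fun s s' hne hN =>
    fst_lt_of_mem_FNcell hp (hB s s' hne hN), fun s s' hne hx hA => ?_⟩
  · rw [hPτ, hPτ]
    exact hP h
  have hτ' := eq_of_fst_eq_of_mem_FNcell hp hx
  rcases hr'.total s s' with hss' | hs's
  · exact (hp.2.2 s s' hτ' hss' hne).2
  · exact absurd (hC s' s hτ'.symm hs's hne.symm) (AllBefore.not_allBefore hσ hA)

theorem convex_phiCond : Convex ℝ (PhiCond τ σ) := by
  refine convex_iff_forall_pos.2 fun p ⟨hpx, hp₁, hp₂⟩ q ⟨hqx, hq₁, hq₂⟩ a b ha hb _ => ?_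
  have fst_apply : ∀ s, ((a • p + b • q) s).1 = a * (p s).1 + b * (q s).1 := fun _ => rfl
  have snd_apply : ∀ s, ((a • p + b • q) s).2 = a * (p s).2 + b * (q s).2 := fun _ => rfl
  refine ⟨fun s s' hτ => ?_, fun s s' hne hN => ?_, fun s s' hne hx hA => ?_⟩
  · rw [fst_apply, fst_apply]
    exact add_le_add (mul_le_mul_of_nonneg_left (hpx s s' hτ) ha.le)
      (mul_le_mul_of_nonneg_left (hqx s s' hτ) hb.le)
  · rw [fst_apply, fst_apply]
    exact add_lt_add (mul_lt_mul_of_pos_left (hp₁ s s' hne hN) ha)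
      (mul_lt_mul_of_pos_left (hq₁ s s' hne hN) hb)
  -- both summands of the `x`-difference have the same sign, so both vanish
  obtain ⟨hpx', hqx'⟩ : (p s).1 = (p s').1 ∧ (q s).1 = (q s').1 := by
    rw [fst_apply, fst_apply] at hx
    rcases le_total (τ s) (τ s') with hτ | hτ
    · exact eq_and_eq_of_mul_add_mul_eq ha hb (hpx s s' hτ) (hqx s s' hτ) hx
    · obtain ⟨hp', hq'⟩ := eq_and_eq_of_mul_add_mul_eq ha hb (hpx s' s hτ) (hqx s' s hτ) hx.symm
      exact ⟨hp'.symm, hq'.symm⟩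
  rw [snd_apply, snd_apply]
  exact add_lt_add (mul_lt_mul_of_pos_left (hp₂ s s' hne hpx' hA) ha)
    (mul_lt_mul_of_pos_left (hq₂ s s' hne hqx' hA) hb)

theorem phiCond_nonempty (hσ : Function.Surjective σ)
    (hB : ∀ s s', s ≠ s' → Nested σ s s' → τ s < τ s') : (PhiCond τ σ).Nonempty := by
  refine ⟨fun s => (((τ s : ℕ) : ℝ), ((Function.surjInv hσ s : Fin k) : ℕ)), fun s s' h => ?_,
    fun s s' hne hN => ?_, fun s s' _ _ hA => ?_⟩
  all_goals dsimp only
  · exact_mod_cast h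
  · exact_mod_cast hB s s' hne hN
  · exact_mod_cast hA _ _ (Function.surjInv_eq hσ s) (Function.surjInv_eq hσ s')

end Phi

section Lex

variable {S : Type*} {n n' k : ℕ} {r : S → S → Prop} {τ : S → Fin n} {τ' : S → Fin n'}
  {σ : Fin k → S} {p : S → ℝ × ℝ}

theorem isPruned2Tree_toLex (hp : Function.Injective p) (hτ' : Function.Surjective τ')
    (hle : ∀ s s', τ' s ≤ τ' s' ↔ (p s).1 ≤ (p s').1) :
    IsPruned2Tree (fun s s' => toLex (p s) ≤ toLex (p s')) τ' :=
  ⟨isLinearOrder_comap (toLex.injective.comp hp), hτ', fun s s' h =>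
    (hle s s').2 <| (Prod.Lex.toLex_le_toLex.1 h).elim le_of_lt fun h => h.1.le⟩

theorem mem_FNcell_toLex (hp : Function.Injective p)
    (hle : ∀ s s', τ' s ≤ τ' s' ↔ (p s).1 ≤ (p s').1) :
    p ∈ FNcell (fun s s' => toLex (p s) ≤ toLex (p s')) τ' := by
  refine ⟨hp, fun s s' h => ?_, fun s s' h hss' hne => ?_⟩
  · simpa only [← not_le, hle] using h
  have hx : (p s).1 = (p s').1 := by simpa only [le_antisymm_iff, hle] using h
  refine ⟨hx, ?_⟩
  rcases Prod.Lex.toLex_le_toLex.1 hss' with hlt | ⟨-, hy⟩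
  · exact absurd hx hlt.ne
  · exact hy.lt_of_ne fun hy' => hne (hp (Prod.ext hx hy'))

theorem phiCond_subset_phi [Fintype S] (hτ : Function.Surjective τ)
    (hC : ∀ s s', τ s = τ s' → r s s' → s ≠ s' → AllBefore σ s s') :
    PhiCond τ σ ⊆ Phi r τ σ := by
  rintro p ⟨hpx, hp₁, hp₂⟩
  have hp := injective_of_condC1_of_condC2 hp₁ hp₂
  obtain ⟨m, τ', hτ', hle⟩ := exists_surjective_fin_le_iff fun s => (p s).1
  have hlt : ∀ s s', τ' s < τ' s' ↔ (p s).1 < (p s').1 := fun s s' => by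
    simp only [← not_le, hle]
  have heq : ∀ s s', τ' s = τ' s' ↔ (p s).1 = (p s').1 := fun s s' => by
    simp only [le_antisymm_iff, hle]
  have hx_eq : ∀ s s', τ s = τ s' → (p s).1 = (p s').1 := fun s s' h =>
    (hpx s s' h.le).antisymm (hpx s' s h.ge)
  have hcell := mem_FNcell_toLex hp hle
  refine ⟨m, _, τ', isPruned2Tree_toLex hp hτ' hle,
    ⟨fun s s' hne hN => (hlt s s').2 (hp₁ s s' hne hN), fun s s' h hss' hne => ?_⟩,
    ⟨fun c => τ' (Function.surjInv hτ c), fun c c' h => ?_, fun s => ?_,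
      fun s s' h hss' hne => ?_⟩, hcell⟩
  · have hx := (heq s s').1 h
    rcases allBefore_or_nested hne with hA | hA | hN | hN
    · exact hA
    · exact absurd (hp₂ s' s hne.symm hx.symm hA) (hcell.2.2 s s' h hss' hne).2.asymm
    · exact absurd hx (hp₁ s s' hne hN).ne
    · exact absurd hx (hp₁ s' s hne.symm hN).ne'
  · refine (hle _ _).2 (hpx _ _ ?_)
    rwa [Function.surjInv_eq hτ, Function.surjInv_eq hτ]
  · exact (heq _ _).2 (hx_eq _ _ (Function.surjInv_eq hτ _).symm)
  · have hx := hx_eq s s' h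
    exact Prod.Lex.toLex_le_toLex.2 (Or.inr ⟨hx, (hp₂ s s' hne hx (hC s s' h hss' hne)).le⟩)

end Lex

theorem statement7_general {S : Type*} [Fintype S] (k : ℕ)
    {n : ℕ} (r : S → S → Prop) (τ : S → Fin n)
    (htree : IsPruned2Tree r τ) (σ : Fin k → S) (hσ : MemD σ)
    (hτσ : MemDtree r τ σ) :
    ContractibleSpace ↥(Phi r τ σ) := by
  have hPhi : Phi r τ σ = PhiCond τ σ :=
    (phi_subset_phiCond hσ.1).antisymm (phiCond_subset_phi htree.2.1 hτσ.2)
  rw [hPhi]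
  exact convex_phiCond.contractibleSpace (phiCond_nonempty hσ.1 hτσ.1)

/-- For `σ ∈ D(S, N)` and a pruned 2-tree `(r, τ)` with
`σ ∈ D(τ, N)`, the space `Φ_σ(τ)` is contractible. -/
theorem statement7 {S : Type*} [Fintype S] (N k : ℕ)
    (hk : k = N + Fintype.card S) {n : ℕ} (r : S → S → Prop) (τ : S → Fin n)
    (htree : IsPruned2Tree r τ) (σ : Fin k → S) (hσ : MemD σ)
    (hτσ : MemDtree r τ σ) :
    ContractibleSpace ↥(Phi r τ σ) :=
  statement7_general k r τ htree σ hσ hτσ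
end
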